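/- Let N ≥ 2, let r₁,…,r_N > 0, let S be a nonnegative integrable NWU random variable with E[S] > 0, and let Y₁,…,Y_N be i.i.d. copies of S. Define the full-replication threshold λ_N = 1/E[min{Y₁/r₁,…,Y_N/r_N}] (assuming the expectation is positive) and the best no-replication threshold λ₁ = (∑_{i=1}^N rᵢ)/E[S] (achieved with unknown job types by assigning to server i with probability proportional to rᵢ). Then λ_N ≥ λ₁. -/

import Mathlib

/-!
Under full replication a job leaves as soon as the first replica finishes, so its service time is
`Z = minᵢ Yᵢ / rᵢ`. By independence `P(Z > t) = ∏ᵢ P(S > rᵢ t)`, and the NWU property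
`F̄(a + b) ≥ F̄(a) F̄(b)` bounds this product by `P(S > (∑ᵢ rᵢ) t) = P(S / ∑ᵢ rᵢ > t)`.
Thus `Z` is stochastically dominated by `S / ∑ᵢ rᵢ`; integrating the tails gives
`E[Z] ≤ E[S] / ∑ᵢ rᵢ`, which is the claim after taking reciprocals.
-/

open MeasureTheory ProbabilityTheory Finset

theorem prod_le_apply_sum_of_supermultiplicative {ι : Type*} (F : ℝ → ℝ) (hF₀ : ∀ t, 0 ≤ F t)
    (hF : ∀ a b : ℝ, 0 ≤ a → 0 ≤ b → F (a + b) ≥ F a * F b)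
    {s : Finset ι} (hs : s.Nonempty) {x : ι → ℝ} (hx : ∀ i ∈ s, 0 ≤ x i) :
    ∏ i ∈ s, F (x i) ≤ F (∑ i ∈ s, x i) := by
  induction hs using Finset.Nonempty.cons_induction with
  | singleton i => simp
  | cons a s _ _ ih =>
    rw [prod_cons, sum_cons]
    have hx' : ∀ i ∈ s, 0 ≤ x i := fun i hi => hx i (mem_cons_of_mem hi)
    calc F (x a) * ∏ i ∈ s, F (x i)
        ≤ F (x a) * F (∑ i ∈ s, x i) := mul_le_mul_of_nonneg_left (ih hx') (hF₀ _)
      _ ≤ F (x a + ∑ i ∈ s, x i) := hF _ _ (hx a (mem_cons_self a s)) (sum_nonneg hx')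

theorem lt_ciInf_iff_of_finite {ι α : Type*} [Finite ι] [Nonempty ι]
    [ConditionallyCompleteLinearOrder α] {f : ι → α} {a : α} :
    a < ⨅ i, f i ↔ ∀ i, a < f i := by
  refine ⟨fun h i => h.trans_le (ciInf_le (Set.finite_range f).bddBelow i), fun h => ?_⟩
  obtain ⟨i, hi⟩ := exists_eq_ciInf_of_finite (f := f)
  exact hi ▸ h i

section Probability

variable {Ω : Type*} [MeasurableSpace Ω] {P : Measure Ω}

theorem integral_le_integral_of_measureReal_lt_le [IsFiniteMeasure P] {X W : Ω → ℝ}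
    (hX₀ : 0 ≤ᵐ[P] X) (hX : AEMeasurable X P) (hW₀ : 0 ≤ᵐ[P] W) (hW : Integrable W P)
    (htail : ∀ t > 0, P.real {ω | t < X ω} ≤ P.real {ω | t < W ω}) :
    ∫ ω, X ω ∂P ≤ ∫ ω, W ω ∂P := by
  have htail' : ∀ t > 0, P {ω | t < X ω} ≤ P {ω | t < W ω} := fun t ht =>
    (ENNReal.toReal_le_toReal (measure_ne_top _ _) (measure_ne_top _ _)).1 (htail t ht)
  have hW_antitone : Antitone fun t : ℝ => P {ω | t < W ω} := fun a b hab =>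
    measure_mono fun ω (h : b < W ω) => hab.trans_lt h
  have hlintegral : ∫⁻ ω, ENNReal.ofReal (X ω) ∂P ≤ ∫⁻ ω, ENNReal.ofReal (W ω) ∂P := by
    rw [lintegral_eq_lintegral_meas_lt P hX₀ hX,
      lintegral_eq_lintegral_meas_lt P hW₀ hW.1.aemeasurable]
    exact setLIntegral_mono hW_antitone.measurable htail'
  rw [integral_eq_lintegral_of_nonneg_ae hX₀ hX.aestronglyMeasurable,
    integral_eq_lintegral_of_nonneg_ae hW₀ hW.1]
  exact ENNReal.toReal_mono hW.lintegral_lt_top.ne hlintegral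

variable {ι : Type*} [Fintype ι] [Nonempty ι]

theorem measureReal_lt_iInf_div_eq_prod {Y : ι → Ω → ℝ} {S : Ω → ℝ}
    (hindep : iIndepFun Y P) (hid : ∀ i, IdentDistrib (Y i) S P P)
    {r : ι → ℝ} (hr : ∀ i, 0 < r i) (t : ℝ) :
    P.real {ω | t < ⨅ i, Y i ω / r i} = ∏ i, P.real {ω | r i * t < S ω} := by
  have hset : {ω | t < ⨅ i, Y i ω / r i} = ⋂ i, Y i ⁻¹' Set.Ioi (r i * t) := by
    ext ω
    simp only [Set.mem_ofPred_eq, lt_ciInf_iff_of_finite, lt_div_iff₀ (hr _), mul_comm t,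
      Set.mem_iInter, Set.mem_preimage, Set.mem_Ioi]
  rw [hset, measureReal_def, hindep.meas_iInter fun i => ⟨_, measurableSet_Ioi, rfl⟩,
    ENNReal.toReal_prod]
  exact prod_congr rfl fun i _ => congrArg ENNReal.toReal ((hid i).measure_mem_eq measurableSet_Ioi)

end Probability

theorem full_replication_threshold_ge_general
    {Ω : Type*} [MeasurableSpace Ω] (P : Measure Ω) [IsProbabilityMeasure P]
    (N : ℕ) (hN : 2 ≤ N) (r : Fin N → ℝ) (hr : ∀ i, 0 < r i)
    (S : Ω → ℝ) (hS : ∀ ω, 0 ≤ S ω) (hSint : Integrable S P)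
    (Fbar : ℝ → ℝ) (hFbar : ∀ t, Fbar t = (P {ω | t < S ω}).toReal)
    (hNWU : ∀ t₁ t₂ : ℝ, 0 ≤ t₁ → 0 ≤ t₂ → Fbar (t₁ + t₂) ≥ Fbar t₁ * Fbar t₂)
    (Y : Fin N → Ω → ℝ)
    (hindep : iIndepFun Y P)
    (hid : ∀ i, IdentDistrib (Y i) S P P)
    (hEmin : 0 < ∫ ω, (⨅ i, Y i ω / r i) ∂P) :
    (∑ i, r i) / (∫ ω, S ω ∂P) ≤ 1 / (∫ ω, (⨅ i, Y i ω / r i) ∂P) := by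
  have : Nonempty (Fin N) := ⟨⟨0, by omega⟩⟩
  have hR : 0 < ∑ i, r i := sum_pos (fun i _ => hr i) univ_nonempty
  have hY₀ : ∀ i, 0 ≤ᵐ[P] Y i := fun i =>
    (hid i).symm.ae_snd measurableSet_Ici (ae_of_all P hS)
  have hZ₀ : 0 ≤ᵐ[P] fun ω => ⨅ i, Y i ω / r i := by
    filter_upwards [ae_all_iff.2 hY₀] with ω hω
    exact le_ciInf fun i => div_nonneg (hω i) (hr i).le
  have htail : ∀ t > 0, P.real {ω | t < ⨅ i, Y i ω / r i} ≤ P.real {ω | t < S ω / ∑ i, r i} := by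
    intro t ht
    rw [measureReal_lt_iInf_div_eq_prod hindep hid hr]
    simp only [lt_div_iff₀ hR, mul_comm t, sum_mul]
    simp only [hFbar] at hNWU
    exact prod_le_apply_sum_of_supermultiplicative _ (fun _ => measureReal_nonneg) hNWU
      univ_nonempty fun i _ => mul_nonneg (hr i).le ht.le
  have hEZ := integral_le_integral_of_measureReal_lt_le hZ₀
    (AEMeasurable.iInf fun i => (hid i).aemeasurable_fst.div_const _)
    (ae_of_all P fun ω => div_nonneg (hS ω) hR.le) (hSint.div_const _) htail
  rw [integral_div] at hEZ
  rw [← one_div_div]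
  exact one_div_le_one_div_of_le hEmin hEZ

/-- Single-job-type instance of Theorem 3: for an NWU nonnegative integrable random
variable `S` with `E[S] > 0`, i.i.d. copies `Y i` and positive speeds `r i`, the
full-replication stability threshold `λ_N = 1 / E[min_i Y i / r i]` is at least the
best no-replication threshold `λ₁ = (∑ i, r i) / E[S]`. -/
theorem full_replication_threshold_ge
    {Ω : Type*} [MeasurableSpace Ω] (P : Measure Ω) [IsProbabilityMeasure P]
    (N : ℕ) (hN : 2 ≤ N) (r : Fin N → ℝ) (hr : ∀ i, 0 < r i)
    (S : Ω → ℝ) (hS : ∀ ω, 0 ≤ S ω) (hSint : Integrable S P)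
    (Fbar : ℝ → ℝ) (hFbar : ∀ t, Fbar t = (P {ω | t < S ω}).toReal)
    (hNWU : ∀ t₁ t₂ : ℝ, 0 ≤ t₁ → 0 ≤ t₂ → Fbar (t₁ + t₂) ≥ Fbar t₁ * Fbar t₂)
    (hES : 0 < ∫ ω, S ω ∂P)
    (Y : Fin N → Ω → ℝ) (hYmeas : ∀ i, Measurable (Y i))
    (hindep : iIndepFun Y P)
    (hid : ∀ i, IdentDistrib (Y i) S P P)
    (hEmin : 0 < ∫ ω, (⨅ i, Y i ω / r i) ∂P) :
    (∑ i, r i) / (∫ ω, S ω ∂P) ≤ 1 / (∫ ω, (⨅ i, Y i ω / r i) ∂P) :=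
  full_replication_threshold_ge_general P N hN r hr S hS hSint Fbar hFbar hNWU Y hindep hid hEmin
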